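/- arXiv:2510.09143 — 3 statements merged into one kernel-verified Lean document; each statement's English description precedes it below -/
import Mathlib

section
/- Every finite 2-connected simple graph G on n vertices has a spanning 2-connected subgraph H with at most 2n − 3 edges. -/
open SimpleGraph

/-- A finite graph is 2-connected if it has at least 3 vertices, is connected,
and removing any single vertex leaves a connected graph. -/
def TwoConnected {V : Type*} [Fintype V] (G : SimpleGraph V) : Prop :=
  3 ≤ Fintype.card V ∧ G.Connected ∧
    ∀ v : V, (G.induce ({v}ᶜ : Set V)).Connected

namespace Aux

variable {V : Type*} {W : Type*}

/-- A pair of internally disjoint paths between adjacent vertices, avoiding the edge. -/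
def ChordedPair (G : SimpleGraph V) : Prop :=
  ∃ (x y : V) (_ : G.Adj x y) (p q : G.Walk x y), p.IsPath ∧ q.IsPath ∧
    (∀ z, z ∈ p.support → z ∈ q.support → z = x ∨ z = y) ∧
    s(x, y) ∉ p.edges ∧ s(x, y) ∉ q.edges

/-- Reachability transfer. -/
lemma reach_mono {A B : SimpleGraph W} (h : ∀ a b : W, A.Adj a b → B.Reachable a b)
    {a b : W} (hr : A.Reachable a b) : B.Reachable a b := by
  obtain ⟨w⟩ := hr
  induction w with
  | nil => exact Reachable.refl _
  | cons h' w' ih => exact (h _ _ h').trans ih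

/-- A walk with support inside `s` gives reachability in the induced graph. -/
lemma reach_induce {H : SimpleGraph W} {s : Set W} {a b : W} (w : H.Walk a b)
    (hw : ∀ z ∈ w.support, z ∈ s) (ha : a ∈ s) (hb : b ∈ s) :
    (H.induce s).Reachable ⟨a, ha⟩ ⟨b, hb⟩ := by
  induction w with
  | nil => exact Reachable.refl _
  | @cons u v t h' w' ih =>
      have hv : v ∈ s := hw v (by simp)
      have h1 : (H.induce s).Adj ⟨u, ha⟩ ⟨v, hv⟩ := h'
      exact h1.reachable.trans (ih (fun z hz => hw z (by simp [hz])) hv hb)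

lemma count_one_nil [DecidableEq V] {G : SimpleGraph V} {v : V} (q : G.Walk v v)
    (h : q.support.count v = 1) : q = SimpleGraph.Walk.nil := by
  cases q with
  | nil => rfl
  | cons h' q' =>
      exfalso
      have h1 : v ∈ q'.support := q'.end_mem_support
      have h2 : 0 < q'.support.count v := List.count_pos_iff.mpr h1
      rw [SimpleGraph.Walk.support_cons, List.count_cons_self] at h
      omega

lemma path_loop {G : SimpleGraph V} {v : V} (q : G.Walk v v) (hq : q.IsPath) :
    q = SimpleGraph.Walk.nil := by
  cases q with
  | nil => rfl
  | cons h' q' =>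
      exfalso
      rw [SimpleGraph.Walk.cons_isPath_iff] at hq
      exact hq.2 q'.end_mem_support

lemma takeUntil_start [DecidableEq V] {G : SimpleGraph V} {v w : V} (p : G.Walk v w)
    (h : v ∈ p.support) : p.takeUntil v h = SimpleGraph.Walk.nil :=
  count_one_nil _ (p.count_support_takeUntil_eq_one h)

lemma takeUntil_congr [DecidableEq V] {G : SimpleGraph V} {v w u : V}
    {p q : G.Walk v w} (h : p = q) (hu : u ∈ p.support) :
    p.takeUntil u hu = q.takeUntil u (h ▸ hu) := by subst h; rfl

lemma eq_start_of_length_zero {G : SimpleGraph V} {a b u : V} (q : G.Walk a b)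
    (h : q.length = 0) (hu : u ∈ q.support) : u = a := by
  cases q with
  | nil => simpa using hu
  | cons h' q' => simp at h

/-- Totality of the "comes before" order on a walk. -/
lemma takeUntil_total [DecidableEq V] {G : SimpleGraph V} :
    ∀ {v w : V} (p : G.Walk v w) (u₁ u₂ : V) (h₁ : u₁ ∈ p.support) (h₂ : u₂ ∈ p.support),
    u₁ ∈ (p.takeUntil u₂ h₂).support ∨ u₂ ∈ (p.takeUntil u₁ h₁).support
  | v, _, .nil, u₁, u₂, h₁, h₂ => by
      left
      have : u₁ = v := by simpa using h₁
      subst this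
      exact SimpleGraph.Walk.start_mem_support _
  | v, w, .cons r q, u₁, u₂, h₁, h₂ => by
      by_cases hu₁ : u₁ = v
      · left; subst hu₁; exact SimpleGraph.Walk.start_mem_support _
      by_cases hu₂ : u₂ = v
      · right; subst hu₂; exact SimpleGraph.Walk.start_mem_support _
      have h₁' : u₁ ∈ q.support := by
        rw [SimpleGraph.Walk.support_cons] at h₁
        rcases List.mem_cons.mp h₁ with h | h
        · exact absurd h hu₁
        · exact h
      have h₂' : u₂ ∈ q.support := by
        rw [SimpleGraph.Walk.support_cons] at h₂
        rcases List.mem_cons.mp h₂ with h | h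
        · exact absurd h hu₂
        · exact h
      have e₁ : (SimpleGraph.Walk.cons r q).takeUntil u₁ h₁
          = SimpleGraph.Walk.cons r (q.takeUntil u₁ h₁') := by
        simp only [SimpleGraph.Walk.takeUntil]
        rw [dif_neg (fun hh => hu₁ hh.symm)]
      have e₂ : (SimpleGraph.Walk.cons r q).takeUntil u₂ h₂
          = SimpleGraph.Walk.cons r (q.takeUntil u₂ h₂') := by
        simp only [SimpleGraph.Walk.takeUntil]
        rw [dif_neg (fun hh => hu₂ hh.symm)]
      rcases takeUntil_total q u₁ u₂ h₁' h₂' with h | h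
      · left; rw [e₂]; simp [h]
      · right; rw [e₁]; simp [h]

/-- `takeUntil` of a prefix agrees with `takeUntil` of the whole walk. -/
lemma takeUntil_takeUntil' [DecidableEq V] {G : SimpleGraph V} :
    ∀ {v w : V} (p : G.Walk v w) (t : V) (ht : t ∈ p.support) (u : V)
      (hu : u ∈ (p.takeUntil t ht).support),
      (p.takeUntil t ht).takeUntil u hu = p.takeUntil u (p.support_takeUntil_subset ht hu)
  | v, _, .nil, t, ht, u, hu => by
      have huv : u = v :=
        eq_start_of_length_zero _ (Nat.le_zero.mp ((SimpleGraph.Walk.nil).length_takeUntil_le ht)) hu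
      subst huv
      rw [takeUntil_start, takeUntil_start]
  | v, w, .cons r q, t, ht, u, hu => by
      by_cases hu0 : u = v
      · subst hu0
        rw [takeUntil_start, takeUntil_start]
      by_cases ht0 : t = v
      · exfalso
        subst ht0
        rw [takeUntil_start _ ht] at hu
        exact hu0 (by simpa using hu)
      · have ht' : t ∈ q.support := by
          rw [SimpleGraph.Walk.support_cons] at ht
          rcases List.mem_cons.mp ht with h | h
          · exact absurd h ht0
          · exact h
        have e_t : (SimpleGraph.Walk.cons r q).takeUntil t ht
            = SimpleGraph.Walk.cons r (q.takeUntil t ht') := by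
          simp only [SimpleGraph.Walk.takeUntil]
          rw [dif_neg (fun hh => ht0 hh.symm)]
        have hu' : u ∈ (SimpleGraph.Walk.cons r (q.takeUntil t ht')).support := e_t ▸ hu
        have hu'' : u ∈ (q.takeUntil t ht').support := by
          rw [SimpleGraph.Walk.support_cons] at hu'
          rcases List.mem_cons.mp hu' with h | h
          · exact absurd h hu0
          · exact h
        rw [takeUntil_congr e_t]
        have e_u : (SimpleGraph.Walk.cons r (q.takeUntil t ht')).takeUntil u hu'
            = SimpleGraph.Walk.cons r ((q.takeUntil t ht').takeUntil u hu'') := by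
          simp only [SimpleGraph.Walk.takeUntil]
          rw [dif_neg (fun hh => hu0 hh.symm)]
        rw [e_u, takeUntil_takeUntil' q t ht' u hu'']
        have hu3 : u ∈ q.support := q.support_takeUntil_subset ht' hu''
        have e_u2 : (SimpleGraph.Walk.cons r q).takeUntil u
            ((SimpleGraph.Walk.cons r q).support_takeUntil_subset ht hu)
            = SimpleGraph.Walk.cons r (q.takeUntil u hu3) := by
          simp only [SimpleGraph.Walk.takeUntil]
          rw [dif_neg (fun hh => hu0 hh.symm)]
        rw [e_u2]

/-- Packaging a chain `a` before `b` before `c`. -/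
lemma chain_pack [DecidableEq V] {G : SimpleGraph V} {x y : V} (p : G.Walk x y) {a b c : V}
    (h1 : c ∈ p.support) (h2 : b ∈ p.support)
    (hbc : b ∈ (p.takeUntil c h1).support) (hab : a ∈ (p.takeUntil b h2).support) :
    ∃ (h1' : c ∈ p.support) (h2' : b ∈ (p.takeUntil c h1').support),
      a ∈ ((p.takeUntil c h1').takeUntil b h2').support := by
  refine ⟨h1, hbc, ?_⟩
  rw [takeUntil_takeUntil']
  exact hab

/-- Among three vertices on a walk, we can order them. -/
lemma sel [DecidableEq V] {G : SimpleGraph V} {x y : V} (p : G.Walk x y) {P : V → Prop}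
    {a b c : V} (ha : P a) (hb : P b) (hc : P c)
    (hab : a ≠ b) (hac : a ≠ c) (hbc : b ≠ c)
    (has : a ∈ p.support) (hbs : b ∈ p.support) (hcs : c ∈ p.support) :
    ∃ a' b' c', P a' ∧ P b' ∧ P c' ∧ a' ≠ b' ∧ a' ≠ c' ∧ b' ≠ c' ∧
      ∃ (h1 : c' ∈ p.support) (h2 : b' ∈ (p.takeUntil c' h1).support),
        a' ∈ ((p.takeUntil c' h1).takeUntil b' h2).support := by
  rcases takeUntil_total p a b has hbs with h₁ | h₁
  · rcases takeUntil_total p b c hbs hcs with h₂ | h₂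
    · exact ⟨a, b, c, ha, hb, hc, hab, hac, hbc, chain_pack p hcs hbs h₂ h₁⟩
    · rcases takeUntil_total p a c has hcs with h₃ | h₃
      · exact ⟨a, c, b, ha, hc, hb, hac, hab, fun h => hbc h.symm, chain_pack p hbs hcs h₂ h₃⟩
      · exact ⟨c, a, b, hc, ha, hb, fun h => hac h.symm, fun h => hbc h.symm, hab,
          chain_pack p hbs has h₁ h₃⟩
  · rcases takeUntil_total p a c has hcs with h₂ | h₂
    · exact ⟨b, a, c, hb, ha, hc, fun h => hab h.symm, hbc, hac,
        chain_pack p hcs has h₂ h₁⟩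
    · rcases takeUntil_total p b c hbs hcs with h₃ | h₃
      · exact ⟨b, c, a, hb, hc, ha, hbc, fun h => hab h.symm, fun h => hac h.symm,
          chain_pack p has hcs h₂ h₃⟩
      · exact ⟨c, b, a, hc, hb, ha, fun h => hbc h.symm, fun h => hac h.symm,
          fun h => hab h.symm, chain_pack p has hbs h₁ h₃⟩

/-- A path from `x` to `b` of length ≥ 2 does not use the edge `s(x,b)`. -/
lemma no_start_edge {G : SimpleGraph V} {x b : V} (w : G.Walk x b) (hw : w.IsPath)
    (hlen : 2 ≤ w.length) : s(x, b) ∉ w.edges := by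
  cases w with
  | nil => simp
  | @cons u m v h' w' =>
      intro hmem
      rw [SimpleGraph.Walk.edges_cons] at hmem
      rw [SimpleGraph.Walk.cons_isPath_iff] at hw
      rcases List.mem_cons.mp hmem with h | h
      · have hbm : b = m := by
          rcases Sym2.eq_iff.mp h with ⟨-, h2'⟩ | ⟨h1', -⟩
          · exact h2'
          · exact absurd h1' h'.ne
        subst hbm
        have : w' = SimpleGraph.Walk.nil := path_loop w' hw.1
        subst this
        simp at hlen
      · exact hw.2 (SimpleGraph.Walk.fst_mem_support_of_mem_edges w' h)

/-- The main construction: from a path with three neighbors of `x` on it, get a chorded pair. -/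
lemma constr [DecidableEq V] {G : SimpleGraph V} {x y a b c : V} (p : G.Walk x y)
    (hp : p.IsPath) (hxc : G.Adj x c) (hxb : G.Adj x b)
    (hbc : b ≠ c) (hax : a ≠ x) (hab : a ≠ b)
    (h1 : c ∈ p.support) (h2 : b ∈ (p.takeUntil c h1).support)
    (h3 : a ∈ ((p.takeUntil c h1).takeUntil b h2).support) :
    ChordedPair G := by
  set pc := p.takeUntil c h1 with hpcdef
  have hpc : pc.IsPath := hp.takeUntil h1
  set pxb := pc.takeUntil b h2 with hpxbdef
  have hpxb : pxb.IsPath := hpc.takeUntil h2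
  set pbc := pc.dropUntil b h2 with hpbcdef
  have hpbc : pbc.IsPath := hpc.dropUntil h2
  have hspec : pxb.append pbc = pc := pc.take_spec h2
  have hsupp : pc.support = pxb.support ++ pbc.support.tail := by
    rw [← hspec, SimpleGraph.Walk.support_append]
  have hnd : (pxb.support ++ pbc.support.tail).Nodup := by
    rw [← hsupp]; exact hpc.support_nodup
  rw [List.nodup_append] at hnd
  have disj : ∀ z ∈ pxb.support, z ∈ pbc.support.tail → False := fun z h1 h2 => hnd.2.2 z h1 z h2 rfl
  have hbx : b ≠ x := hxb.ne'
  have hxpbc : x ∉ pbc.support := by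
    intro hx
    have hx' : x ∈ pbc.support.tail := by
      rw [pbc.support_eq_cons] at hx
      rcases List.mem_cons.mp hx with h | h
      · exact absurd h.symm hbx
      · exact h
    exact disj x pxb.start_mem_support hx'
  have hxb_len : 2 ≤ pxb.length := by
    by_contra hlt
    push_neg at hlt
    interval_cases hlen : pxb.length
    · exact hax (eq_start_of_length_zero pxb hlen h3)
    · -- length 1 : support = [x, b], but a ∈ support, a ≠ x, a ≠ b
      have hsl : pxb.support.length = 2 := by
        rw [SimpleGraph.Walk.length_support, hlen]
      have hxs : x ∈ pxb.support := pxb.start_mem_support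
      have hbs : b ∈ pxb.support := pxb.end_mem_support
      have hnodup := hpxb.support_nodup
      -- a, x, b distinct elements of a 2-element list with no duplicates
      have habx : b ≠ x := hbx
      have hcard : ({a, x, b} : Finset V).card = 3 := by
        rw [Finset.card_insert_of_notMem (by simp [hax, hab]),
          Finset.card_insert_of_notMem (by simp [habx.symm])]
        simp
      have hsub : ({a, x, b} : Finset V) ⊆ pxb.support.toFinset := by
        intro z hz
        simp only [Finset.mem_insert, Finset.mem_singleton] at hz
        rcases hz with rfl | rfl | rfl <;> simp [h3, hxs, hbs]
      have := Finset.card_le_card hsub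
      have h2' := List.toFinset_card_le pxb.support
      omega
  refine ⟨x, b, hxb, pxb, SimpleGraph.Walk.cons hxc pbc.reverse, hpxb, ?_, ?_, ?_, ?_⟩
  · rw [SimpleGraph.Walk.cons_isPath_iff]
    refine ⟨hpbc.reverse, ?_⟩
    simpa using hxpbc
  · intro z hz1 hz2
    rw [SimpleGraph.Walk.support_cons] at hz2
    rcases List.mem_cons.mp hz2 with h | h
    · exact Or.inl h
    · have hz3 : z ∈ pbc.support := by simpa using h
      by_cases hzb : z = b
      · exact Or.inr hzb
      · exfalso
        have : z ∈ pbc.support.tail := by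
          rw [pbc.support_eq_cons] at hz3
          rcases List.mem_cons.mp hz3 with h' | h'
          · exact absurd h' hzb
          · exact h'
        exact disj z hz1 this
  · exact no_start_edge pxb hpxb hxb_len
  · intro hmem
    rw [SimpleGraph.Walk.edges_cons] at hmem
    rcases List.mem_cons.mp hmem with h | h
    · rcases Sym2.eq_iff.mp h with ⟨_, h2'⟩ | ⟨h1', _⟩
      · exact hbc h2'
      · exact hxc.ne h1'
    · have : s(x, b) ∈ pbc.edges := by
        rw [SimpleGraph.Walk.edges_reverse] at h
        simpa using h
      exact hxpbc (SimpleGraph.Walk.fst_mem_support_of_mem_edges pbc this)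

lemma card_edge_del [Fintype V] [DecidableEq V] (G : SimpleGraph V) [DecidableRel G.Adj]
    (v : V) :
    G.edgeSet.ncard ≤ (G.induce ({v}ᶜ : Set V)).edgeSet.ncard + G.degree v := by
  classical
  have hsub : G.edgeSet ⊆
      (Sym2.map (Subtype.val : ({v}ᶜ : Set V) → V) '' (G.induce ({v}ᶜ : Set V)).edgeSet)
        ∪ G.incidenceSet v := by
    intro e
    induction e with
    | _ a b =>
        intro he
        rw [SimpleGraph.mem_edgeSet] at he
        by_cases hva : a = v
        · right; subst hva; exact G.mk'_mem_incidenceSet_left_iff.mpr he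
        by_cases hvb : b = v
        · right; subst hvb; exact G.mk'_mem_incidenceSet_right_iff.mpr he
        left
        refine ⟨s((⟨a, by simp [hva]⟩ : ({v}ᶜ : Set V)), (⟨b, by simp [hvb]⟩ : ({v}ᶜ : Set V))),
          ?_, ?_⟩
        · rw [SimpleGraph.mem_edgeSet]
          exact he
        · simp
  calc G.edgeSet.ncard
      ≤ ((Sym2.map (Subtype.val : ({v}ᶜ : Set V) → V) '' (G.induce ({v}ᶜ : Set V)).edgeSet)
          ∪ G.incidenceSet v).ncard := Set.ncard_le_ncard hsub (Set.toFinite _)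
    _ ≤ (Sym2.map (Subtype.val : ({v}ᶜ : Set V) → V) '' (G.induce ({v}ᶜ : Set V)).edgeSet).ncard
          + (G.incidenceSet v).ncard := Set.ncard_union_le _ _
    _ ≤ (G.induce ({v}ᶜ : Set V)).edgeSet.ncard + (G.incidenceSet v).ncard := by
        gcongr
        exact Set.ncard_image_le (Set.toFinite _)
    _ = (G.induce ({v}ᶜ : Set V)).edgeSet.ncard + G.degree v := by
        congr 1
        rw [Set.ncard_eq_toFinset_card']
        exact G.card_incidenceFinset_eq_degree v

lemma chorded_lift {G : SimpleGraph V} {s : Set V} (h : ChordedPair (G.induce s)) :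
    ChordedPair G := by
  obtain ⟨x, y, hxy, p, q, hp, hq, hdisj, hep, heq⟩ := h
  have f : G.induce s ↪g G := SimpleGraph.Embedding.induce s
  have hinj : Function.Injective (f : s → V) := f.injective
  refine ⟨f x, f y, f.toHom.map_adj hxy, p.map f.toHom, q.map f.toHom,
    SimpleGraph.Walk.map_isPath_of_injective hinj hp,
    SimpleGraph.Walk.map_isPath_of_injective hinj hq, ?_, ?_, ?_⟩
  · intro z hz1 hz2
    rw [SimpleGraph.Walk.support_map] at hz1 hz2
    obtain ⟨z1, hz1m, rfl⟩ := List.mem_map.mp hz1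
    obtain ⟨z2, hz2m, hz2e⟩ := List.mem_map.mp hz2
    have : z2 = z1 := hinj hz2e
    subst this
    rcases hdisj z2 hz1m hz2m with rfl | rfl
    · exact Or.inl rfl
    · exact Or.inr rfl
  · intro hmem
    rw [SimpleGraph.Walk.edges_map] at hmem
    obtain ⟨e, hem, hee⟩ := List.mem_map.mp hmem
    have : e = s(x, y) := by
      apply Sym2.map.injective hinj
      exact hee
    subst this
    exact hep hem
  · intro hmem
    rw [SimpleGraph.Walk.edges_map] at hmem
    obtain ⟨e, hem, hee⟩ := List.mem_map.mp hmem
    have : e = s(x, y) := by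
      apply Sym2.map.injective hinj
      exact hee
    subst this
    exact heq hem

universe u

/-- Any graph with at least `2n-2` edges contains a "chorded pair". -/
lemma chorded (n : ℕ) : ∀ {V : Type u} [Fintype V] (G : SimpleGraph V),
    Fintype.card V = n → 3 ≤ n → 2 * n ≤ G.edgeSet.ncard + 2 → ChordedPair G := by
  intro V _ G hcard hn hm
  classical
  have hedge : G.edgeSet.ncard = G.edgeFinset.card := by
    rw [Set.ncard_eq_toFinset_card']
    simp only [SimpleGraph.edgeFinset]
  by_cases hn3 : n = 3
  · exfalso
    have h1 : G.edgeFinset.card ≤ Nat.choose (Fintype.card V) 2 :=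
      G.card_edgeFinset_le_card_choose_two
    rw [hcard, hn3] at h1
    have : Nat.choose 3 2 = 3 := by decide
    omega
  have hn4 : 4 ≤ n := by omega
  by_cases hd : ∃ v : V, G.degree v ≤ 2
  · obtain ⟨v, hv⟩ := hd
    have hcard' : Fintype.card ({v}ᶜ : Set V) = n - 1 := by
      rw [Fintype.card_compl_set]
      simp [hcard]
    have hE := card_edge_del G v
    have hm' : 2 * (n - 1) ≤ (G.induce ({v}ᶜ : Set V)).edgeSet.ncard + 2 := by omega
    exact chorded_lift (chorded (n - 1) (G.induce ({v}ᶜ : Set V)) hcard' (by omega) hm')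
  · push_neg at hd
    have hne : Nonempty V := by
      rw [← Fintype.card_pos_iff]
      omega
    obtain ⟨v0⟩ := hne
    set P : ℕ → Prop := fun l => ∃ (x y : V) (p : G.Walk x y), p.IsPath ∧ p.length = l with hP
    have hP0 : P 0 := ⟨v0, v0, SimpleGraph.Walk.nil, SimpleGraph.Walk.IsPath.nil, rfl⟩
    have hLspec : P (Nat.findGreatest P n) := Nat.findGreatest_spec (Nat.zero_le n) hP0
    set L := Nat.findGreatest P n with hLdef
    obtain ⟨x, y, p, hp, hlen⟩ := hLspec
    have hmax : ∀ w : V, G.Adj x w → w ∈ p.support := by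
      intro w hw
      by_contra hws
      have hq : (SimpleGraph.Walk.cons hw.symm p).IsPath := by
        rw [SimpleGraph.Walk.cons_isPath_iff]
        exact ⟨hp, hws⟩
      have hlt : L + 1 ≤ n := by
        have := hq.length_lt
        rw [SimpleGraph.Walk.length_cons, hlen, hcard] at this
        omega
      have hng : ¬ P (L + 1) :=
        Nat.findGreatest_is_greatest (by rw [← hLdef]; omega) hlt
      exact hng ⟨w, y, SimpleGraph.Walk.cons hw.symm p, hq, by simp [hlen]⟩
    have hdeg : 3 ≤ (G.neighborFinset x).card := by
      have := hd x
      rw [SimpleGraph.card_neighborFinset_eq_degree]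
      omega
    obtain ⟨t, hts, htc⟩ := Finset.exists_subset_card_eq hdeg
    rw [Finset.card_eq_three] at htc
    obtain ⟨a, b, c, hab, hac, hbc, rfl⟩ := htc
    have hadj : ∀ z ∈ ({a, b, c} : Finset V), G.Adj x z := by
      intro z hz
      have := hts hz
      rwa [SimpleGraph.mem_neighborFinset] at this
    have haa : G.Adj x a := hadj a (by simp)
    have hba : G.Adj x b := hadj b (by simp)
    have hca : G.Adj x c := hadj c (by simp)
    obtain ⟨a', b', c', ha', hb', hc', hab', hac', hbc', h1, h2, h3⟩ :=
      sel p (P := fun z => G.Adj x z) haa hba hca hab hac hbc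
        (hmax a haa) (hmax b hba) (hmax c hca)
    exact constr p hp hc' hb' hbc' ha'.ne' hab' h1 h2 h3

lemma del_keep [Fintype V] {G : SimpleGraph V} (h2 : TwoConnected G) {x y : V}
    (hxy : G.Adj x y) (p q : G.Walk x y) (hp : p.IsPath) (hq : q.IsPath)
    (hdisj : ∀ z, z ∈ p.support → z ∈ q.support → z = x ∨ z = y)
    (hep : s(x, y) ∉ p.edges) (heq : s(x, y) ∉ q.edges) :
    TwoConnected (G.deleteEdges {s(x, y)}) := by
  obtain ⟨hcard, hconn, hvert⟩ := h2
  have hpdel : ∀ e ∈ p.edges, e ∉ ({s(x, y)} : Set (Sym2 V)) := by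
    intro e he hmem
    rw [Set.mem_singleton_iff] at hmem
    subst hmem
    exact hep he
  have hbase : (G.deleteEdges {s(x, y)}).Reachable x y := ⟨p.toDeleteEdges _ hpdel⟩
  have hstep : ∀ a b : V, G.Adj a b → (G.deleteEdges {s(x, y)}).Reachable a b := by
    intro a b hab
    by_cases he : s(a, b) = s(x, y)
    · rcases Sym2.eq_iff.mp he with ⟨h1, h2⟩ | ⟨h1, h2⟩
      · subst h1; subst h2; exact hbase
      · subst h1; subst h2; exact hbase.symm
    · refine SimpleGraph.Adj.reachable ?_
      rw [SimpleGraph.deleteEdges_adj]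
      exact ⟨hab, by simp [he]⟩
  refine ⟨hcard, (SimpleGraph.connected_iff _).mpr
    ⟨fun a b => reach_mono hstep (hconn.preconnected a b), hconn.nonempty⟩, ?_⟩
  intro v
  have hA := hvert v
  have hstep' : ∀ a b : ({v}ᶜ : Set V), (G.induce ({v}ᶜ : Set V)).Adj a b →
      ((G.deleteEdges {s(x, y)}).induce ({v}ᶜ : Set V)).Reachable a b := by
    intro a b hab
    have hab' : G.Adj ↑a ↑b := hab
    by_cases he : s((a : V), (b : V)) = s(x, y)
    · have hav : (a : V) ≠ v := by
        have h := a.2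
        rw [Set.mem_compl_iff, Set.mem_singleton_iff] at h
        exact h
      have hbv : (b : V) ≠ v := by
        have h := b.2
        rw [Set.mem_compl_iff, Set.mem_singleton_iff] at h
        exact h
      have hxyab : ((a : V) = x ∧ (b : V) = y) ∨ ((a : V) = y ∧ (b : V) = x) :=
        Sym2.eq_iff.mp he
      have hvx : x ≠ v := by
        rcases hxyab with ⟨h1, h2⟩ | ⟨h1, h2⟩
        · exact h1 ▸ hav
        · exact h2 ▸ hbv
      have hvy : y ≠ v := by
        rcases hxyab with ⟨h1, h2⟩ | ⟨h1, h2⟩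
        · exact h2 ▸ hbv
        · exact h1 ▸ hav
      have hx : x ∈ ({v}ᶜ : Set V) := by simp [hvx]
      have hy : y ∈ ({v}ᶜ : Set V) := by simp [hvy]
      -- choose a walk among p, q avoiding v
      obtain ⟨w0, hw0sup, hw0e⟩ : ∃ w0 : G.Walk x y, v ∉ w0.support ∧ s(x, y) ∉ w0.edges := by
        by_cases hvp : v ∈ p.support
        · refine ⟨q, ?_, heq⟩
          intro hvq
          rcases hdisj v hvp hvq with h | h
          · exact hvx h.symm
          · exact hvy h.symm
        · exact ⟨p, hvp, hep⟩
      have hw0del : ∀ e ∈ w0.edges, e ∉ ({s(x, y)} : Set (Sym2 V)) := by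
        intro e hee hmem
        rw [Set.mem_singleton_iff] at hmem
        subst hmem
        exact hw0e hee
      let w1 : (G.deleteEdges {s(x, y)}).Walk x y := w0.toDeleteEdges _ hw0del
      have hw1sup : ∀ z ∈ w1.support, z ∈ ({v}ᶜ : Set V) := by
        intro z hz
        have : z ∈ w0.support := by
          have hz' : z ∈ (w0.transfer (G.deleteEdges {s(x, y)}) ?hyp).support := hz
          case hyp => exact fun e he => SimpleGraph.edgeSet_deleteEdges _ ▸
            ⟨SimpleGraph.Walk.edges_subset_edgeSet w0 he, hw0del e he⟩
          rwa [SimpleGraph.Walk.support_transfer] at hz'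
        simp only [Set.mem_compl_iff, Set.mem_singleton_iff]
        intro hzv
        exact hw0sup (hzv ▸ this)
      have r0 := reach_induce w1 hw1sup hx hy
      rcases hxyab with ⟨h1, h2⟩ | ⟨h1, h2⟩
      · have ha : a = ⟨x, hx⟩ := Subtype.ext h1
        have hb : b = ⟨y, hy⟩ := Subtype.ext h2
        rw [ha, hb]
        exact r0
      · have ha : a = ⟨y, hy⟩ := Subtype.ext h1
        have hb : b = ⟨x, hx⟩ := Subtype.ext h2
        rw [ha, hb]
        exact r0.symm
    · have hadj : (G.deleteEdges {s(x, y)}).Adj ↑a ↑b := by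
        rw [SimpleGraph.deleteEdges_adj]
        exact ⟨hab', by simp [he]⟩
      have hadj' : ((G.deleteEdges {s(x, y)}).induce ({v}ᶜ : Set V)).Adj a b := hadj
      exact hadj'.reachable
  exact (SimpleGraph.connected_iff _).mpr
    ⟨fun a b => reach_mono hstep' (hA.preconnected a b), hA.nonempty⟩

lemma exists_min [Fintype V] (G : SimpleGraph V) (h : TwoConnected G) :
    ∃ H, H ≤ G ∧ TwoConnected H ∧ ∀ e ∈ H.edgeSet, ¬ TwoConnected (H.deleteEdges {e}) := by
  classical
  generalize hm : G.edgeSet.ncard = m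
  induction m using Nat.strong_induction_on generalizing G with
  | _ m ih =>
    by_cases hmin : ∀ e ∈ G.edgeSet, ¬ TwoConnected (G.deleteEdges {e})
    · exact ⟨G, le_refl G, h, hmin⟩
    · push_neg at hmin
      obtain ⟨e, he, h2⟩ := hmin
      have hlt : (G.deleteEdges {e}).edgeSet.ncard < m := by
        rw [SimpleGraph.edgeSet_deleteEdges]
        rw [← hm]
        have : G.edgeSet \ {e} = G.edgeSet \ {e} := rfl
        calc (G.edgeSet \ {e}).ncard < G.edgeSet.ncard := by
              rw [show G.edgeSet \ {e} = G.edgeSet \ {e} from rfl]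
              exact Set.ncard_diff_singleton_lt_of_mem he (Set.toFinite _)
          _ = G.edgeSet.ncard := rfl
      obtain ⟨H, hH1, hH2, hH3⟩ := ih _ hlt _ h2 rfl
      exact ⟨H, le_trans hH1 (SimpleGraph.deleteEdges_le _), hH2, hH3⟩

end Aux

theorem stmt_11 {V : Type*} [Fintype V] (G : SimpleGraph V)
    (h2c : TwoConnected G) :
    ∃ H : SimpleGraph V, H ≤ G ∧ TwoConnected H ∧
      H.edgeSet.ncard ≤ 2 * Fintype.card V - 3 := by
  classical
  obtain ⟨H, hHG, hH2, hHmin⟩ := Aux.exists_min G h2c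
  refine ⟨H, hHG, hH2, ?_⟩
  by_contra hbig
  push_neg at hbig
  have hn3 : 3 ≤ Fintype.card V := hH2.1
  have hm : 2 * Fintype.card V ≤ H.edgeSet.ncard + 2 := by omega
  obtain ⟨x, y, hxy, p, q, hp, hq, hdisj, hep, heq⟩ :=
    Aux.chorded (Fintype.card V) H rfl hn3 hm
  exact hHmin s(x, y) ((SimpleGraph.mem_edgeSet H).mpr hxy)
    (Aux.del_keep hH2 hxy p q hp hq hdisj hep heq)
end

section
/- Let T be a finite tree with at least two vertices. For a nonempty proper subset S of the vertex set of T, let the boundary B(S) be the set of vertices incident to some edge of T with exactly one endpoint in S. Then: (i) every function x from the vertices of T to the nonnegative reals satisfying ∑_{v ∈ B(S)} x(v) ≥ 1 for every nonempty proper subset S of vertices has total sum ∑_v x(v) ≥ vc(T); and (ii) there exists such a function x whose total sum equals vc(T). In particular, the minimum total sum over all such functions equals the vertex cover number vc(T). -/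
open SimpleGraph

/-- The minimum size of a vertex cover of `G`. -/
noncomputable def vc {V : Type*} [Fintype V] (G : SimpleGraph V) : ℕ :=
  sInf {n | ∃ C : Set V, (∀ ⦃v w : V⦄, G.Adj v w → v ∈ C ∨ w ∈ C) ∧ C.ncard = n}

-- leaf existence in acyclic graphs
lemma exists_leaf {V : Type*} [Fintype V] [DecidableEq V] {G : SimpleGraph V}
    (hG : G.IsAcyclic) (s : Finset V) (he : ∃ a ∈ s, ∃ b ∈ s, G.Adj a b) :
    ∃ ℓ ∈ s, ∃ u ∈ s, G.Adj ℓ u ∧ ∀ w ∈ s, G.Adj ℓ w → w = u := by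
  classical
  set P : ℕ → Prop := fun n => ∃ a b : V, ∃ p : G.Walk a b, p.IsPath ∧
    (∀ v ∈ p.support, v ∈ s) ∧ p.length = n with hP
  obtain ⟨a, ha, b, hb, hab⟩ := he
  have hPne : P 1 := by
    refine ⟨a, b, SimpleGraph.Walk.cons hab SimpleGraph.Walk.nil, ?_, ?_, rfl⟩
    · simp [SimpleGraph.Walk.isPath_def, hab.ne]
    · intro v hv
      simp [SimpleGraph.Walk.support_cons] at hv
      rcases hv with rfl | rfl <;> assumption
  have hbdd : BddAbove {n | P n} := by
    refine ⟨Fintype.card V, ?_⟩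
    rintro n ⟨x, y, p, hp, -, rfl⟩
    exact le_of_lt hp.length_lt
  have hmem : sSup {n | P n} ∈ {n | P n} := Nat.sSup_mem ⟨1, hPne⟩ hbdd
  set N := sSup {n | P n} with hN
  have hN1 : 1 ≤ N := le_csSup hbdd hPne
  obtain ⟨x, y, p, hp, hsup, hlen⟩ := hmem
  cases p with
  | nil => simp at hlen; omega
  | @cons _ c _ hxc q =>
    have hq : q.IsPath ∧ x ∉ q.support := (SimpleGraph.Walk.cons_isPath_iff _ _).1 hp
    refine ⟨x, hsup x (by simp), c, hsup c (by simp), hxc, ?_⟩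
    intro w hw hadj
    by_contra hwc
    by_cases hws : w ∈ (SimpleGraph.Walk.cons hxc q).support
    · -- build a cycle
      have hwx : w ≠ x := fun h => G.loopless.irrefl x (h ▸ hadj)
      have hwq : w ∈ q.support := by
        simp [SimpleGraph.Walk.support_cons] at hws
        tauto
      set r := q.takeUntil w hwq with hr
      have hrpath : r.IsPath := hq.1.takeUntil hwq
      have hxr : x ∉ r.support := fun h => hq.2 (q.support_takeUntil_subset hwq h)
      have hcons : (SimpleGraph.Walk.cons hxc r).IsPath :=
        (SimpleGraph.Walk.cons_isPath_iff _ _).2 ⟨hrpath, hxr⟩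
      have hcyc : (SimpleGraph.Walk.cons hadj.symm (SimpleGraph.Walk.cons hxc r)).IsCycle := by
        rw [SimpleGraph.Walk.cons_isCycle_iff]
        refine ⟨hcons, ?_⟩
        simp only [SimpleGraph.Walk.edges_cons, List.mem_cons]
        rintro (h | h)
        · rw [Sym2.eq_iff] at h
          rcases h with ⟨h1, h2⟩ | ⟨h1, h2⟩
          · exact hwx h1
          · exact hwc h1
        · exact hxr (r.snd_mem_support_of_mem_edges h)
      exact hG _ hcyc
    · -- extend the path
      have hext : P (N + 1) := by
        refine ⟨w, y, SimpleGraph.Walk.cons hadj.symm (SimpleGraph.Walk.cons hxc q),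
          (SimpleGraph.Walk.cons_isPath_iff _ _).2 ⟨hp, hws⟩, ?_, by simp [hlen]⟩
        intro v hv
        simp only [SimpleGraph.Walk.support_cons, List.mem_cons] at hv
        rcases hv with rfl | hv
        · exact hw
        · exact hsup v (by simpa using hv)
      have : N + 1 ≤ N := le_csSup hbdd hext
      omega

-- fractional cover dominates an integral cover in forests
lemma cover_lemma {V : Type*} [Fintype V] [DecidableEq V] {G : SimpleGraph V}
    (hG : G.IsAcyclic) (x : V → ℝ) (hx : ∀ v, 0 ≤ x v)
    (s : Finset V) (hcon : ∀ u ∈ s, ∀ v ∈ s, G.Adj u v → 1 ≤ x u + x v) :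
    ∃ C : Finset V, (∀ u ∈ s, ∀ v ∈ s, G.Adj u v → u ∈ C ∨ v ∈ C) ∧
      (C.card : ℝ) ≤ ∑ v ∈ s, x v := by
  classical
  induction s using Finset.strongInduction with
  | _ s ih =>
    by_cases he : ∃ a ∈ s, ∃ b ∈ s, G.Adj a b
    · obtain ⟨ℓ, hℓ, u, hu, hadj, huniq⟩ := exists_leaf hG s he
      have hne : ℓ ≠ u := hadj.ne
      set s' := s \ {ℓ, u} with hs'
      have hsub : s' ⊂ s := by
        refine Finset.ssubset_iff_of_subset (Finset.sdiff_subset) |>.2 ⟨ℓ, hℓ, by simp [hs']⟩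
      obtain ⟨C', hC'cov, hC'card⟩ := ih s' hsub
        (fun a ha b hb h => hcon a (Finset.sdiff_subset ha) b (Finset.sdiff_subset hb) h)
      refine ⟨insert u C', ?_, ?_⟩
      · intro a ha b hb h
        by_cases hau : a = u
        · left; simp [hau]
        by_cases hbu : b = u
        · right; simp [hbu]
        by_cases haℓ : a = ℓ
        · subst haℓ
          exact absurd (huniq b hb h) hbu
        by_cases hbℓ : b = ℓ
        · subst hbℓ
          exact absurd (huniq a ha h.symm) hau
        · have ha' : a ∈ s' := by simp [hs', ha, haℓ, hau]
          have hb' : b ∈ s' := by simp [hs', hb, hbℓ, hbu]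
          rcases hC'cov a ha' b hb' h with h | h
          · left; exact Finset.mem_insert_of_mem h
          · right; exact Finset.mem_insert_of_mem h
      · have hpair : ({ℓ, u} : Finset V) ⊆ s := by
          intro z hz; simp at hz; rcases hz with rfl | rfl <;> assumption
        have hsum : ∑ v ∈ s', x v + ∑ v ∈ ({ℓ, u} : Finset V), x v = ∑ v ∈ s, x v :=
          Finset.sum_sdiff hpair
        have hlu : ∑ v ∈ ({ℓ, u} : Finset V), x v = x ℓ + x u := Finset.sum_pair hne
        have h1 : 1 ≤ x ℓ + x u := hcon ℓ hℓ u hu hadj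
        have hcard : ((insert u C').card : ℝ) ≤ (C'.card : ℝ) + 1 := by
          have := Finset.card_insert_le u C'
          exact_mod_cast this
        calc ((insert u C').card : ℝ) ≤ (C'.card : ℝ) + 1 := hcard
          _ ≤ ∑ v ∈ s', x v + (x ℓ + x u) := by linarith
          _ = ∑ v ∈ s, x v := by rw [← hsum, hlu]
    · refine ⟨∅, ?_, ?_⟩
      · intro a ha b hb h
        exact absurd ⟨a, ha, b, hb, h⟩ he
      · simpa using Finset.sum_nonneg (fun v _ => hx v)

-- crossing edge on a walk
lemma walk_cross {V : Type*} {G : SimpleGraph V} {S : Set V} :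
    ∀ {a b : V} (_ : G.Walk a b), a ∈ S → b ∉ S →
      ∃ u v, G.Adj u v ∧ u ∈ S ∧ v ∉ S := by
  intro a b p
  induction p with
  | nil => intro h1 h2; exact absurd h1 h2
  | @cons a c b h q ih =>
    intro ha hb
    by_cases hc : c ∈ S
    · exact ih hc hb
    · exact ⟨a, c, h, ha, hc⟩

theorem stmt_14 {V : Type*} [Fintype V] (T : SimpleGraph V)
    (htree : T.Connected ∧ T.IsAcyclic) (hn : 2 ≤ Fintype.card V)
    (B : Set V → Set V)
    (hB : ∀ S : Set V, B S = {v : V | ∃ w : V, T.Adj v w ∧ ¬ (v ∈ S ↔ w ∈ S)}) :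
    IsLeast {s : ℝ | ∃ x : V → ℝ, (∀ v : V, 0 ≤ x v) ∧
        (∀ S : Set V, S.Nonempty → S ≠ Set.univ → 1 ≤ ∑ᶠ v ∈ B S, x v) ∧
        s = ∑ v : V, x v}
      ((vc T : ℝ)) := by
  classical
  obtain ⟨hconn, hacyc⟩ := htree
  constructor
  · -- membership: indicator of a minimum vertex cover
    have hne : {n | ∃ C : Set V, (∀ ⦃v w : V⦄, T.Adj v w → v ∈ C ∨ w ∈ C) ∧ C.ncard = n}.Nonempty :=
      ⟨(Set.univ : Set V).ncard, Set.univ, fun v w _ => Or.inl trivial, rfl⟩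
    have hmem := Nat.sInf_mem hne
    obtain ⟨C₀, hC₀cov, hC₀card⟩ := hmem
    refine ⟨fun v => if v ∈ C₀ then (1 : ℝ) else 0, fun v => by positivity, ?_, ?_⟩
    · intro S hSne hSuniv
      obtain ⟨a, ha⟩ := hSne
      obtain ⟨b, hb⟩ : ∃ b, b ∉ S := by
        by_contra h
        push_neg at h
        exact hSuniv (Set.eq_univ_of_forall h)
      obtain ⟨u, v, hadj, hu, hv⟩ := walk_cross ((hconn a b).some) ha hb
      have huB : u ∈ B S := by
        rw [hB]; exact ⟨v, hadj, by tauto⟩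
      have hvB : v ∈ B S := by
        rw [hB]; exact ⟨u, hadj.symm, by tauto⟩
      obtain ⟨z, hzB, hz⟩ : ∃ z ∈ B S, z ∈ C₀ := by
        rcases hC₀cov hadj with h | h
        · exact ⟨u, huB, h⟩
        · exact ⟨v, hvB, h⟩
      have hfin : (B S).Finite := Set.toFinite _
      rw [finsum_mem_eq_finite_toFinset_sum _ hfin]
      calc (1 : ℝ) = (if z ∈ C₀ then (1:ℝ) else 0) := by simp [hz]
        _ ≤ ∑ w ∈ hfin.toFinset, (if w ∈ C₀ then (1:ℝ) else 0) := by
            refine Finset.single_le_sum (f := fun w => if w ∈ C₀ then (1:ℝ) else 0)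
              (fun w _ => by positivity) ?_
            simpa using hzB
    · have hsum : ∑ v : V, (if v ∈ C₀ then (1:ℝ) else 0) = (C₀.ncard : ℝ) := by
        rw [Finset.sum_boole, Set.ncard_eq_toFinset_card' C₀]
        congr 1
        simp [Finset.filter_eq_self]
      unfold vc
      rw [← hC₀card]
      simpa using hsum.symm
  · -- lower bound
    rintro r ⟨x, hx, hcon, rfl⟩
    -- edge constraints
    have hedge : ∀ u v : V, T.Adj u v → 1 ≤ x u + x v := by
      intro u v hadj
      set G' := T \ fromEdgeSet {s(u, v)} with hG'
      set S : Set V := {w | G'.Reachable u w} with hS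
      have hbridge : T.IsBridge s(u, v) :=
        (isAcyclic_iff_forall_edge_isBridge.1 hacyc) (by exact hadj)
      have huS : u ∈ S := ⟨SimpleGraph.Walk.nil⟩
      have hvS : v ∉ S := by
        intro h
        exact (isBridge_iff.1 hbridge) h
      have hBsub : B S ⊆ {u, v} := by
        intro w hw
        rw [hB] at hw
        obtain ⟨w', hadj', hxor⟩ := hw
        by_cases hee : s(w, w') = s(u, v)
        · rw [Sym2.eq_iff] at hee
          rcases hee with ⟨rfl, rfl⟩ | ⟨rfl, rfl⟩
          · exact Or.inl rfl
          · exact Or.inr rfl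
        · exfalso
          have hadjG' : G'.Adj w w' := by
            rw [hG']
            simp only [SimpleGraph.sdiff_adj, SimpleGraph.fromEdgeSet_adj]
            exact ⟨hadj', fun h => hee h.1⟩
          have : w ∈ S ↔ w' ∈ S := by
            constructor
            · intro h; exact h.trans ⟨hadjG'.toWalk⟩
            · intro h; exact h.trans ⟨hadjG'.symm.toWalk⟩
          exact hxor this
      have h1 := hcon S ⟨u, huS⟩ (fun h => hvS (h ▸ Set.mem_univ v))
      have hfin : (B S).Finite := Set.toFinite _
      rw [finsum_mem_eq_finite_toFinset_sum _ hfin] at h1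
      have hsub2 : hfin.toFinset ⊆ {u, v} := by
        intro w hw
        have := hBsub (hfin.mem_toFinset.1 hw)
        simpa using this
      have h2 : ∑ w ∈ hfin.toFinset, x w ≤ ∑ w ∈ ({u, v} : Finset V), x w :=
        Finset.sum_le_sum_of_subset_of_nonneg hsub2 (fun w _ _ => hx w)
      have h3 : ∑ w ∈ ({u, v} : Finset V), x w = x u + x v := Finset.sum_pair hadj.ne
      linarith
    obtain ⟨C, hCcov, hCcard⟩ := cover_lemma hacyc x hx Finset.univ
      (fun u _ v _ h => hedge u v h)
    have hvcle : vc T ≤ C.card := by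
      apply Nat.sInf_le
      refine ⟨(C : Set V), fun v w h => ?_, by simp⟩
      exact hCcov v (Finset.mem_univ v) w (Finset.mem_univ w) h
    calc ((vc T : ℝ)) ≤ (C.card : ℝ) := by exact_mod_cast hvcle
      _ ≤ ∑ v : V, x v := hCcard
end

section
/- Let d ≥ 3 and let G be a finite d-regular simple graph with at least one vertex. Let S be a total vertex cover of G of minimum size, let T be the complement of S in the vertex set, and for each i with 0 ≤ i ≤ d−1 let S_i be the set of vertices of S having exactly i neighbors in T. Then |S_0| ≤ |S_{d−1}|. -/
open SimpleGraph

/-- `S` is a total vertex cover of `G`: a vertex cover which is also a total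
dominating set. -/
def IsTotalVertexCover {V : Type*} (G : SimpleGraph V) (S : Set V) : Prop :=
  (∀ ⦃v w : V⦄, G.Adj v w → v ∈ S ∨ w ∈ S) ∧ (∀ v : V, ∃ u ∈ S, G.Adj v u)

theorem stmt_16 {V : Type*} [Fintype V] [Nonempty V] (G : SimpleGraph V)
    (d : ℕ) (hd : 3 ≤ d)
    (hreg : ∀ v : V, (G.neighborSet v).ncard = d)
    (S : Set V)
    (hS : IsTotalVertexCover G S)
    (hmin : ∀ S' : Set V, IsTotalVertexCover G S' → S.ncard ≤ S'.ncard) :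
    {v ∈ S | (G.neighborSet v ∩ Sᶜ).ncard = 0}.ncard ≤
      {v ∈ S | (G.neighborSet v ∩ Sᶜ).ncard = d - 1}.ncard := by
  classical
  set S0 := {v ∈ S | (G.neighborSet v ∩ Sᶜ).ncard = 0} with hS0
  set S1 := {v ∈ S | (G.neighborSet v ∩ Sᶜ).ncard = d - 1} with hS1
  have key : ∀ v ∈ S0, ∃ u, G.neighborSet u ∩ S = {v} := by
    rintro v ⟨hvS, hv0⟩
    have hvT : G.neighborSet v ∩ Sᶜ = ∅ :=
      (Set.ncard_eq_zero (Set.toFinite _)).mp hv0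
    have hnot : ¬ IsTotalVertexCover G (S \ {v}) := by
      intro h
      have h1 := hmin _ h
      have h2 : (S \ {v}).ncard < S.ncard :=
        Set.ncard_diff_singleton_lt_of_mem hvS (Set.toFinite _)
      omega
    have hcov : ∀ ⦃a b : V⦄, G.Adj a b → a ∈ S \ {v} ∨ b ∈ S \ {v} := by
      intro a b hab
      have hSnb : ∀ x, G.Adj v x → x ∈ S := by
        intro x hx
        by_contra hxS
        have : x ∈ G.neighborSet v ∩ Sᶜ := ⟨hx, hxS⟩
        rw [hvT] at this
        exact this
      rcases hS.1 hab with h | h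
      · by_cases hav : a = v
        · subst hav
          have hbS : b ∈ S := hSnb b hab
          exact Or.inr ⟨hbS, fun hbv => G.ne_of_adj hab hbv.symm⟩
        · exact Or.inl ⟨h, hav⟩
      · by_cases hbv : b = v
        · subst hbv
          have haS : a ∈ S := hSnb a hab.symm
          exact Or.inl ⟨haS, fun hav => G.ne_of_adj hab hav⟩
        · exact Or.inr ⟨h, hbv⟩
    have hdom : ¬ (∀ w : V, ∃ u ∈ S \ {v}, G.Adj w u) := by
      intro h
      exact hnot ⟨hcov, h⟩
    push_neg at hdom
    obtain ⟨u, hu⟩ := hdom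
    obtain ⟨w, hwS, hw⟩ := hS.2 u
    have hwv : w = v := by
      by_contra hne
      exact hu w ⟨hwS, hne⟩ hw
    subst hwv
    refine ⟨u, Set.eq_singleton_iff_unique_mem.mpr ⟨⟨hw, hwS⟩, ?_⟩⟩
    rintro x ⟨hx1, hx2⟩
    by_contra hne
    exact hu x ⟨hx2, hne⟩ hx1
  have hmap : ∀ v ∈ S0, ∀ u, G.neighborSet u ∩ S = {v} → u ∈ S1 := by
    intro v hv u huN
    have hvu : v ∈ G.neighborSet u := by
      have : v ∈ G.neighborSet u ∩ S := huN ▸ rfl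
      exact this.1
    have huS : u ∈ S := by
      by_contra huS
      have hsub : G.neighborSet u ⊆ S := by
        intro x hx
        rcases hS.1 (hx : G.Adj u x) with h | h
        · exact absurd h huS
        · exact h
      have : G.neighborSet u ∩ S = G.neighborSet u := Set.inter_eq_left.mpr hsub
      rw [huN] at this
      have := congrArg Set.ncard this
      rw [hreg u, Set.ncard_singleton] at this
      omega
    have hdiff : G.neighborSet u ∩ Sᶜ = G.neighborSet u \ {v} := by
      ext x
      constructor
      · rintro ⟨hx1, hx2⟩
        refine ⟨hx1, fun hxv => ?_⟩
        have : x ∈ G.neighborSet u ∩ S := by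
          rw [huN]; exact hxv
        exact hx2 this.2
      · rintro ⟨hx1, hx2⟩
        refine ⟨hx1, fun hxS => ?_⟩
        have : x ∈ G.neighborSet u ∩ S := ⟨hx1, hxS⟩
        rw [huN] at this
        exact hx2 this
    refine ⟨huS, ?_⟩
    rw [hdiff, Set.ncard_diff_singleton_of_mem hvu, hreg u]
  have hinj : ∀ v ∈ S0, ∀ v' ∈ S0, ∀ u,
      G.neighborSet u ∩ S = {v} → G.neighborSet u ∩ S = {v'} → v = v' := by
    intro v _ v' _ u h1 h2
    rw [h1] at h2
    exact Set.singleton_eq_singleton_iff.mp h2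
  classical
  let f : V → V := fun v => if h : v ∈ S0 then Classical.choose (key v h) else v
  have hf : ∀ v ∈ S0, G.neighborSet (f v) ∩ S = {v} := by
    intro v hv
    simp only [f, dif_pos hv]
    exact Classical.choose_spec (key v hv)
  refine Set.ncard_le_ncard_of_injOn f (fun v hv => hmap v hv _ (hf v hv)) ?_ (Set.toFinite _)
  intro v hv v' hv' heq
  have h1 := hf v hv
  have h2 := hf v' hv'
  rw [heq] at h1
  exact hinj v hv v' hv' _ h1 h2
end
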